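/- Let π be an irreducible ψ-generic representation of the quasi-split non-split group SO_{2l} with normalized Bessel function B_{π,ψ}. If B_{π,ψ}(t) ≠ 0 for some t ∈ T, then t lies in the center of SO_{2l}, i.e. t = I_{2l} or t = −I_{2l}. -/

import Mathlib

open scoped MatrixGroups
open Matrix

noncomputable section

namespace ConverseSO

open Classical in
/-- Evaluate a function defined on `G` at a point of `M` through the (typically injective)
map `c : G → M`, extending by zero. -/
def matFun {G M R : Type*} [Zero R] (c : G → M) (φ : G → R) (m : M) : R :=
  if h : ∃ g, c g = m then φ h.choose else 0

variable (F : Type) [Field F] [Fintype F]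

/-- The antidiagonal matrix `J_m`. -/
def Jmat (m : ℕ) : Matrix (Fin m) (Fin m) F :=
  Matrix.of fun i j => if (i : ℕ) + (j : ℕ) + 1 = m then 1 else 0

/-- The middle-block modification `diag(I_{l-1}, [[0,1],[-ρ,0]], I_{l-1})`. -/
def Dmat (l : ℕ) (ρ : F) : Matrix (Fin (2*l)) (Fin (2*l)) F :=
  Matrix.of fun i j =>
    if (i : ℕ) = l - 1 ∧ (j : ℕ) = l then 1
    else if (i : ℕ) = l ∧ (j : ℕ) = l - 1 then -ρ
    else if i = j ∧ (i : ℕ) ≠ l - 1 ∧ (i : ℕ) ≠ l then 1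
    else 0

/-- `J_{2l,ρ}`. -/
def Jrho (l : ℕ) (ρ : F) : Matrix (Fin (2*l)) (Fin (2*l)) F := Dmat F l ρ * Jmat F (2*l)

/-- The matrix-level special orthogonal "set" attached to a matrix `Jm`. -/
def SOset (m : ℕ) (Jm : Matrix (Fin m) (Fin m) F) : Set (Matrix (Fin m) (Fin m) F) :=
  {g | g.det = 1 ∧ gᵀ * Jm * g = Jm}

/-- The special orthogonal group attached to a matrix `Jm`, as a subgroup of `GL`. -/
def SOgrp (m : ℕ) (Jm : Matrix (Fin m) (Fin m) F) : Subgroup (GL (Fin m) F) where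
  carrier := {g | ((g : Matrix (Fin m) (Fin m) F)).det = 1 ∧
    ((g : Matrix (Fin m) (Fin m) F))ᵀ * Jm * ((g : Matrix (Fin m) (Fin m) F)) = Jm}
  one_mem' := ⟨by simp, by simp⟩
  mul_mem' := by
    rintro a b ⟨ha1, ha2⟩ ⟨hb1, hb2⟩
    refine ⟨by rw [Units.val_mul, Matrix.det_mul, ha1, hb1, one_mul], ?_⟩
    have hab : ((a * b : GL (Fin m) F) : Matrix (Fin m) (Fin m) F)
        = (a : Matrix (Fin m) (Fin m) F) * (b : Matrix (Fin m) (Fin m) F) := Units.val_mul a b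
    rw [hab, Matrix.transpose_mul]
    calc (b : Matrix (Fin m) (Fin m) F)ᵀ * (a : Matrix (Fin m) (Fin m) F)ᵀ * Jm *
          ((a : Matrix (Fin m) (Fin m) F) * (b : Matrix (Fin m) (Fin m) F))
        = (b : Matrix (Fin m) (Fin m) F)ᵀ *
            ((a : Matrix (Fin m) (Fin m) F)ᵀ * Jm * (a : Matrix (Fin m) (Fin m) F)) *
            (b : Matrix (Fin m) (Fin m) F) := by
          simp only [mul_assoc]
      _ = Jm := by rw [ha2, hb2]
  inv_mem' := by
    intro g hg
    obtain ⟨h1, h2⟩ := hg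
    have hv1 : ((g⁻¹ : GL (Fin m) F) : Matrix (Fin m) (Fin m) F) * (g : Matrix (Fin m) (Fin m) F)
        = 1 := by rw [← Units.val_mul, inv_mul_cancel, Units.val_one]
    have hv2 : (g : Matrix (Fin m) (Fin m) F) * ((g⁻¹ : GL (Fin m) F) : Matrix (Fin m) (Fin m) F)
        = 1 := by rw [← Units.val_mul, mul_inv_cancel, Units.val_one]
    constructor
    · have hd := congrArg Matrix.det hv1
      rw [Matrix.det_mul, h1, mul_one, Matrix.det_one] at hd
      exact hd
    · calc ((g⁻¹ : GL (Fin m) F) : Matrix (Fin m) (Fin m) F)ᵀ * Jm *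
            ((g⁻¹ : GL (Fin m) F) : Matrix (Fin m) (Fin m) F)
          = ((g⁻¹ : GL (Fin m) F) : Matrix (Fin m) (Fin m) F)ᵀ *
              ((g : Matrix (Fin m) (Fin m) F)ᵀ * Jm * (g : Matrix (Fin m) (Fin m) F)) *
              ((g⁻¹ : GL (Fin m) F) : Matrix (Fin m) (Fin m) F) := by rw [h2]
        _ = ((g : Matrix (Fin m) (Fin m) F) *
              ((g⁻¹ : GL (Fin m) F) : Matrix (Fin m) (Fin m) F))ᵀ * Jm *
              ((g : Matrix (Fin m) (Fin m) F) *
              ((g⁻¹ : GL (Fin m) F) : Matrix (Fin m) (Fin m) F)) := by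
            rw [Matrix.transpose_mul]; simp only [mul_assoc]
        _ = Jm := by rw [hv2]; simp

/-- The quasi-split even special orthogonal group `SO_{2l}` attached to `J_{2l,ρ}`. -/
abbrev SO2l (l : ℕ) (ρ : F) : Subgroup (GL (Fin (2*l)) F) := SOgrp F (2*l) (Jrho F l ρ)

/-- The odd special orthogonal group `SO_{2m+1}` (split form). -/
abbrev SOodd (m : ℕ) : Subgroup (GL (Fin (2*m+1)) F) := SOgrp F (2*m+1) (Jmat F (2*m+1))

/-- The underlying matrix of an element of a special orthogonal group. -/
def mat {m : ℕ} {Jm : Matrix (Fin m) (Fin m) F} (g : SOgrp F m Jm) :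
    Matrix (Fin m) (Fin m) F :=
  ((g : GL (Fin m) F) : Matrix (Fin m) (Fin m) F)

/-- Upper triangular unipotent predicate for matrices. -/
def upUnip {m : ℕ} (M : Matrix (Fin m) (Fin m) F) : Prop :=
  ∀ i j : Fin m, (j : ℕ) ≤ (i : ℕ) → M i j = if i = j then 1 else 0

/-- The upper triangular unipotent subgroup (as a set) of `SO_{2l}`. -/
def USet (l : ℕ) (ρ : F) : Set (SO2l F l ρ) := {u | upUnip F (mat F u)}

/-- The upper triangular unipotent matrices in `SO_{2m+1}` (matrix level). -/
def UoddMatSet (m : ℕ) : Set (Matrix (Fin (2*m+1)) (Fin (2*m+1)) F) :=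
  {g | g ∈ SOset F (2*m+1) (Jmat F (2*m+1)) ∧ upUnip F g}

/-- The generic character of the upper unipotent subgroup of `SO_{2l}`:
`ψ(u_{1,2} + ⋯ + u_{l-2,l-1} + (1/2)·u_{l-1,l+1})` (1-indexed). -/
def psiU (l : ℕ) (ψ : AddChar F ℂ) (M : Matrix (Fin (2*l)) (Fin (2*l)) F) : ℂ :=
  ψ (∑ i : Fin (2*l), ∑ j : Fin (2*l),
    (if (j : ℕ) = (i : ℕ) + 1 ∧ (i : ℕ) + 3 ≤ l then M i j
     else if (i : ℕ) + 2 = l ∧ (j : ℕ) = l then (2 : F)⁻¹ * M i j else 0))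

/-- The sum `u_{1,2} + ⋯ + u_{n-1,n}` for an `n × n` matrix. -/
def glUSum (n : ℕ) (M : Matrix (Fin n) (Fin n) F) : F :=
  ∑ i : Fin n, ∑ j : Fin n, (if (j : ℕ) = (i : ℕ) + 1 then M i j else 0)

/-- The character `ψ_γ` of `N^{l-n}`:
`ψ(Σ_{i=1}^{l-n-1} v_{i,i+1} + (1/2)·v_{l-n-1,l+1})` (1-indexed). -/
def psiGam (l n : ℕ) (ψ : AddChar F ℂ) (M : Matrix (Fin (2*l)) (Fin (2*l)) F) : ℂ :=
  ψ (∑ i : Fin (2*l), ∑ j : Fin (2*l),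
    (if (j : ℕ) = (i : ℕ) + 1 ∧ (i : ℕ) + 2 + n ≤ l then M i j
     else if (i : ℕ) + 2 + n = l ∧ (j : ℕ) = l then (2 : F)⁻¹ * M i j else 0))

/-- Irreducibility of a representation. -/
def IsIrrep {G V : Type*} [Group G] [AddCommGroup V] [Module ℂ V]
    (π : Representation ℂ G V) : Prop :=
  (∃ v : V, v ≠ 0) ∧
    ∀ W : Submodule ℂ V, (∀ g : G, ∀ v ∈ W, π g v ∈ W) → W = ⊥ ∨ W = ⊤

/-- Block index function determined by a set `C` of cuts (and their mirrors) for `SO_{2l}`. -/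
def blkCut (l : ℕ) (C : Finset ℕ) (i : ℕ) : ℕ :=
  (C.filter (fun c => c ≤ i)).card + (C.filter (fun c => 2*l - c ≤ i)).card

/-- The unipotent radical of the standard parabolic subgroup of `SO_{2l}` given by cuts `C`. -/
def cuspUnip (l : ℕ) (ρ : F) (C : Finset ℕ) : Set (SO2l F l ρ) :=
  {g | ∀ i j : Fin (2*l), blkCut l C (j : ℕ) ≤ blkCut l C (i : ℕ) →
    mat F g i j = if i = j then 1 else 0}

/-- Cuspidality: the full unipotent-radical sums vanish for every proper standard parabolic. -/
def IsCuspidal (l : ℕ) (ρ : F) {V : Type*} [AddCommGroup V] [Module ℂ V]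
    (π : Representation ℂ (SO2l F l ρ) V) : Prop :=
  ∀ C : Finset ℕ, C.Nonempty → (∀ c ∈ C, 1 ≤ c ∧ c ≤ l - 1) →
    ∀ v : V, (∑ᶠ u ∈ cuspUnip F l ρ C, π u v) = 0

/-- `Γ` is a (nonzero) `ψ`-Whittaker functional for `π`. -/
def IsWhittaker (l : ℕ) (ρ : F) (ψ : AddChar F ℂ) {V : Type*} [AddCommGroup V] [Module ℂ V]
    (π : Representation ℂ (SO2l F l ρ) V) (Γ : V →ₗ[ℂ] ℂ) : Prop :=
  Γ ≠ 0 ∧ ∀ u ∈ USet F l ρ, ∀ v : V, Γ (π u v) = psiU F l ψ (mat F u) * Γ v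

/-- `v₀` is a Whittaker vector with `Γ v₀ ≠ 0`. -/
def IsWhitVec (l : ℕ) (ρ : F) (ψ : AddChar F ℂ) {V : Type*} [AddCommGroup V] [Module ℂ V]
    (π : Representation ℂ (SO2l F l ρ) V) (Γ : V →ₗ[ℂ] ℂ) (v₀ : V) : Prop :=
  Γ v₀ ≠ 0 ∧ ∀ u ∈ USet F l ρ, π u v₀ = psiU F l ψ (mat F u) • v₀

/-- The normalized Bessel function attached to the Whittaker data `(Γ, v₀)`. -/
def Bessel (l : ℕ) (ρ : F) {V : Type*} [AddCommGroup V] [Module ℂ V]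
    (π : Representation ℂ (SO2l F l ρ) V) (Γ : V →ₗ[ℂ] ℂ) (v₀ : V) :
    SO2l F l ρ → ℂ :=
  fun g => Γ (π g v₀) / Γ v₀

/-- Equality of central characters. -/
def SameCentralChar (l : ℕ) (ρ : F) {V V' : Type*} [AddCommGroup V] [Module ℂ V]
    [AddCommGroup V'] [Module ℂ V'] (π : Representation ℂ (SO2l F l ρ) V)
    (π' : Representation ℂ (SO2l F l ρ) V') : Prop :=
  ∃ ω : ℂ, (∀ g : SO2l F l ρ, mat F g = -1 → ∀ v : V, π g v = ω • v) ∧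
    (∀ g : SO2l F l ρ, mat F g = -1 → ∀ v' : V', π' g v' = ω • v')
/-- `a^* = J_n · (a⁻¹)ᵀ · J_n`. -/
def aStar (n : ℕ) (a : Matrix (Fin n) (Fin n) F) : Matrix (Fin n) (Fin n) F :=
  Jmat F n * (a⁻¹)ᵀ * Jmat F n

/-- The permutation matrix of `σ`. -/
def permMat (n : ℕ) (σ : Equiv.Perm (Fin n)) : Matrix (Fin n) (Fin n) F :=
  Matrix.of fun i j => if σ j = i then 1 else 0

/-- `t_n(a) = diag(a, I_{2l-2n}, a^*)` inside `2l × 2l` matrices. -/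
def tnMat (l n : ℕ) (a : Matrix (Fin n) (Fin n) F) : Matrix (Fin (2*l)) (Fin (2*l)) F :=
  Matrix.of fun i j =>
    if hi : (i : ℕ) < n then (if hj : (j : ℕ) < n then a ⟨i, hi⟩ ⟨j, hj⟩ else 0)
    else if hi2 : (i : ℕ) < 2*l - n then (if i = j then 1 else 0)
    else if hj2 : 2*l - n ≤ (j : ℕ) then
      aStar F n a ⟨(i : ℕ) - (2*l - n), by have := i.isLt; omega⟩
        ⟨(j : ℕ) - (2*l - n), by have := j.isLt; omega⟩
    else 0

/-- The Weyl representative `w̃_n` of `SO_{2l}` as a block matrix. -/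
def wTildeMat (l n : ℕ) : Matrix (Fin (2*l)) (Fin (2*l)) F :=
  Matrix.of fun i j =>
    if (i : ℕ) < n then (if (j : ℕ) = (i : ℕ) + (2*l - n) then 1 else 0)
    else if (i : ℕ) < l - 1 then (if i = j then 1 else 0)
    else if (i : ℕ) = l - 1 then (if i = j then (-1)^n else 0)
    else if (i : ℕ) < 2*l - n then (if i = j then 1 else 0)
    else (if (j : ℕ) + (2*l - n) = (i : ℕ) then 1 else 0)

/-- The torus matrix `diag(t_1,…,t_{l-1}, [[a,bρ],[b,a]], t_{l-1}⁻¹,…,t_1⁻¹)`. -/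
def torusMat (l : ℕ) (ρ : F) (tv : ℕ → Fˣ) (a b : F) :
    Matrix (Fin (2*l)) (Fin (2*l)) F :=
  Matrix.of fun i j =>
    if (i : ℕ) < l - 1 then (if i = j then (tv (i : ℕ) : F) else 0)
    else if (i : ℕ) = l - 1 then
      (if (j : ℕ) = l - 1 then a else if (j : ℕ) = l then b * ρ else 0)
    else if (i : ℕ) = l then
      (if (j : ℕ) = l - 1 then b else if (j : ℕ) = l then a else 0)
    else (if i = j then ((tv (2*l - 1 - (i : ℕ)))⁻¹ : F) else 0)

/-- The outer element `c = diag(I_{l-1}, 1, -1, I_{l-1})`. -/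
def cMat (l : ℕ) : Matrix (Fin (2*l)) (Fin (2*l)) F :=
  Matrix.of fun i j => if i = j then (if (i : ℕ) = l then -1 else 1) else 0

/-- The torus element `t̃ = diag(I_{l-1}, -1, -1, I_{l-1})`. -/
def tTildeMat (l : ℕ) : Matrix (Fin (2*l)) (Fin (2*l)) F :=
  Matrix.of fun i j =>
    if i = j then (if (i : ℕ) = l - 1 ∨ (i : ℕ) = l then -1 else 1) else 0

/-- `l_n(a) = diag(a, 1, a^*)` inside `(2n+1) × (2n+1)` matrices. -/
def lnMat (n : ℕ) (a : Matrix (Fin n) (Fin n) F) :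
    Matrix (Fin (2*n+1)) (Fin (2*n+1)) F :=
  Matrix.of fun i j =>
    if hi : (i : ℕ) < n then (if hj : (j : ℕ) < n then a ⟨i, hi⟩ ⟨j, hj⟩ else 0)
    else if hi2 : (i : ℕ) = n then (if i = j then 1 else 0)
    else if hj2 : n + 1 ≤ (j : ℕ) then
      aStar F n a ⟨(i : ℕ) - (n+1), by have := i.isLt; omega⟩
        ⟨(j : ℕ) - (n+1), by have := j.isLt; omega⟩
    else 0

/-- The Weyl element `w_n` of `SO_{2n+1}` with block rows `(0,0,I_n)`, `(0,(-1)^n,0)`, `(I_n,0,0)`. -/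
def wnOddMat (n : ℕ) : Matrix (Fin (2*n+1)) (Fin (2*n+1)) F :=
  Matrix.of fun i j =>
    if (i : ℕ) < n then (if (j : ℕ) = (i : ℕ) + n + 1 then 1 else 0)
    else if (i : ℕ) = n then (if i = j then (-1)^n else 0)
    else (if (j : ℕ) + n + 1 = (i : ℕ) then 1 else 0)

/-- `d_n = diag(-1, 1, …, (-1)^n)`. -/
def dnMat (n : ℕ) : Matrix (Fin n) (Fin n) F :=
  Matrix.of fun i j => if i = j then (-1)^((i : ℕ) + 1) else 0

/-- The block permutation matrix `w^{l,n}` of `SO_{2l}`. -/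
def wlnMat (l n : ℕ) : Matrix (Fin (2*l)) (Fin (2*l)) F :=
  Matrix.of fun i j =>
    if (i : ℕ) < n then (if (j : ℕ) = (i : ℕ) + (l - n - 1) then 1 else 0)
    else if (i : ℕ) < l - 1 then (if (j : ℕ) + n = (i : ℕ) then 1 else 0)
    else if (i : ℕ) < l + 1 then (if i = j then 1 else 0)
    else if (i : ℕ) < 2*l - n then (if (j : ℕ) = (i : ℕ) + n then 1 else 0)
    else (if (j : ℕ) + (l - n - 1) = (i : ℕ) then 1 else 0)

/-- `w_{l,l} = diag(γ·I_l, 1, γ⁻¹·I_l)` with `γ = ρ/2`. -/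
def wllMat (l : ℕ) (ρ : F) : Matrix (Fin (2*l+1)) (Fin (2*l+1)) F :=
  Matrix.of fun i j =>
    if i = j then
      (if (i : ℕ) < l then ρ/2 else if (i : ℕ) = l then 1 else (ρ/2)⁻¹)
    else 0

/-- The conjugating matrix `M` for the embedding of `SO_{2l}` into `SO_{2l+1}`. -/
def Mtop (l : ℕ) (ρ : F) : Matrix (Fin (2*l+1)) (Fin (2*l+1)) F :=
  Matrix.of fun i j =>
    if (i : ℕ) + 2 = l + 1 then (if (j : ℕ) = l then 1 else 0)
    else if (i : ℕ) = l then
      (if (j : ℕ) + 2 = l + 1 then (2 : F)⁻¹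
       else if (j : ℕ) = l + 1 then (2 * (ρ/2))⁻¹ else 0)
    else if (i : ℕ) = l + 1 then
      (if (j : ℕ) + 2 = l + 1 then (2 : F)⁻¹
       else if (j : ℕ) = l + 1 then -(2 * (ρ/2))⁻¹ else 0)
    else if i = j then 1 else 0

/-- Insert a trivial `(l+1)`-st row and column (1-indexed) into a `2l × 2l` matrix. -/
def insTop (l : ℕ) (g : Matrix (Fin (2*l)) (Fin (2*l)) F) :
    Matrix (Fin (2*l+1)) (Fin (2*l+1)) F :=
  Matrix.of fun i j =>
    if hi : (i : ℕ) = l then (if (j : ℕ) = l then 1 else 0)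
    else if hj : (j : ℕ) = l then 0
    else
      g ⟨if (i : ℕ) < l then (i : ℕ) else (i : ℕ) - 1, by have := i.isLt; split <;> omega⟩
        ⟨if (j : ℕ) < l then (j : ℕ) else (j : ℕ) - 1, by have := j.isLt; split <;> omega⟩

/-- The embedding of `SO_{2l}` into `SO_{2l+1}` at the matrix level. -/
def embTop (l : ℕ) (ρ : F) (g : Matrix (Fin (2*l)) (Fin (2*l)) F) :
    Matrix (Fin (2*l+1)) (Fin (2*l+1)) F :=
  (Mtop F l ρ)⁻¹ * insTop F l g * Mtop F l ρ

/-- The conjugating matrix `M = diag(I_n, [[0,2],[1,0]], I_n)` (size `2n+2`). -/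
def Mlow (n : ℕ) : Matrix (Fin (2*n+2)) (Fin (2*n+2)) F :=
  Matrix.of fun i j =>
    if (i : ℕ) = n then (if (j : ℕ) = n + 1 then 2 else 0)
    else if (i : ℕ) = n + 1 then (if (j : ℕ) = n then 1 else 0)
    else if i = j then 1 else 0

/-- Insert a trivial `(n+2)`-nd row and column (1-indexed) into a `(2n+1) × (2n+1)` matrix. -/
def insLow (n : ℕ) (g : Matrix (Fin (2*n+1)) (Fin (2*n+1)) F) :
    Matrix (Fin (2*n+2)) (Fin (2*n+2)) F :=
  Matrix.of fun i j =>
    if hi : (i : ℕ) = n + 1 then (if (j : ℕ) = n + 1 then 1 else 0)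
    else if hj : (j : ℕ) = n + 1 then 0
    else
      g ⟨if (i : ℕ) < n + 1 then (i : ℕ) else (i : ℕ) - 1, by have := i.isLt; split <;> omega⟩
        ⟨if (j : ℕ) < n + 1 then (j : ℕ) else (j : ℕ) - 1, by have := j.isLt; split <;> omega⟩

/-- The middle `2n+2` block of the embedding of `SO_{2n+1}` into `SO_{2l}`. -/
def embLowMid (n : ℕ) (g : Matrix (Fin (2*n+1)) (Fin (2*n+1)) F) :
    Matrix (Fin (2*n+2)) (Fin (2*n+2)) F :=
  (Mlow F n)⁻¹ * insLow F n g * Mlow F n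

/-- The embedding of `SO_{2n+1}` into `SO_{2l}` (for `n < l`) at the matrix level. -/
def embLow (l n : ℕ) (g : Matrix (Fin (2*n+1)) (Fin (2*n+1)) F) :
    Matrix (Fin (2*l)) (Fin (2*l)) F :=
  Matrix.of fun i j =>
    if h : l - n - 1 ≤ (i : ℕ) ∧ (i : ℕ) < l + n + 1 ∧ l - n - 1 ≤ (j : ℕ) ∧ (j : ℕ) < l + n + 1
    then embLowMid F n g ⟨(i : ℕ) - (l - n - 1), by omega⟩ ⟨(j : ℕ) - (l - n - 1), by omega⟩
    else if i = j then 1 else 0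
/-- The maximal torus `T` of `SO_{2l}`. -/
def TSet (l : ℕ) (ρ : F) : Set (SO2l F l ρ) :=
  {g | ∃ (tv : ℕ → Fˣ) (a b : F), a^2 - b^2 * ρ = 1 ∧ mat F g = torusMat F l ρ tv a b}

/-- The split subtorus `S` of `T`. -/
def SSet (l : ℕ) (ρ : F) : Set (SO2l F l ρ) :=
  {g | ∃ tv : ℕ → Fˣ, mat F g = torusMat F l ρ tv 1 0}

/-- The standard Borel subgroup `B = T·U` of `SO_{2l}` (as a set). -/
def BorelSet (l : ℕ) (ρ : F) : Set (SO2l F l ρ) :=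
  {b | ∃ t ∈ TSet F l ρ, ∃ u ∈ USet F l ρ, b = t * u}

/-- `w` normalizes the torus `T`. -/
def NormalizesT (l : ℕ) (ρ : F) (w : SO2l F l ρ) : Prop :=
  ∀ t ∈ TSet F l ρ, w * t * w⁻¹ ∈ TSet F l ρ ∧ w⁻¹ * t * w ∈ TSet F l ρ

/-- Standard basis weight `e_k` (as an integral character vector). -/
def eVec (k : ℕ) : ℕ → ℤ := fun i => if i = k then 1 else 0

/-- The simple (restricted) roots of `SO_{2l}`: `α_k = e_k - e_{k+1}` for `k < l-2`
(0-indexed) and `α_{l-2} = e_{l-2}`. -/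
def simpleRoot (l k : ℕ) : ℕ → ℤ :=
  fun i => (if i = k then 1 else 0) - (if i = k + 1 ∧ k + 3 ≤ l then 1 else 0)

/-- The positive (restricted) roots of `SO_{2l}` (type `B_{l-1}`). -/
def posRoot (l : ℕ) : Set (ℕ → ℤ) :=
  {α | (∃ i j, i < j ∧ j < l - 1 ∧ α = fun k => eVec i k - eVec j k) ∨
       (∃ i j, i < j ∧ j < l - 1 ∧ α = fun k => eVec i k + eVec j k) ∨
       (∃ i, i < l - 1 ∧ α = eVec i)}

/-- Negative roots. -/
def negRoot (l : ℕ) : Set (ℕ → ℤ) := {α | (fun k => -(α k)) ∈ posRoot l}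

/-- Simple roots (as a set). -/
def isSimpleRoot (l : ℕ) (α : ℕ → ℤ) : Prop := ∃ k, k < l - 1 ∧ α = simpleRoot l k

/-- Evaluation of an integral character vector on an element of the split torus. -/
def rootEval (l : ℕ) (ρ : F) (α : ℕ → ℤ) (g : SO2l F l ρ) : F :=
  ∏ i : Fin (2*l), (if (i : ℕ) < l - 1 then (mat F g i i) ^ (α (i : ℕ)) else 1)

/-- The Weyl representative `w` maps the character `α` of `S` to the character `β`. -/
def mapsRoot (l : ℕ) (ρ : F) (w : SO2l F l ρ) (α β : ℕ → ℤ) : Prop :=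
  ∀ s ∈ SSet F l ρ, w⁻¹ * s * w ∈ SSet F l ρ ∧
    rootEval F l ρ β s = rootEval F l ρ α (w⁻¹ * s * w)

/-- The Weyl representative `w` supports Bessel functions: every simple root is mapped
to a negative or simple root. -/
def SupportsBessel (l : ℕ) (ρ : F) (w : SO2l F l ρ) : Prop :=
  ∀ k, k < l - 1 → ∃ β : ℕ → ℤ, mapsRoot F l ρ w (simpleRoot l k) β ∧
    (β ∈ negRoot l ∨ isSimpleRoot l β)

/-- `θ_w = {k : wα_k is positive}`. -/
def besselTheta (l : ℕ) (ρ : F) (w : SO2l F l ρ) : Set ℕ :=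
  {k | k < l - 1 ∧ ∃ β : ℕ → ℤ, mapsRoot F l ρ w (simpleRoot l k) β ∧ β ∈ posRoot l}

/-- The cell `B_n(SO_{2l}) = {t_n(w')·w̃_n : w' ∈ W(GL_n)}`. -/
def BnSet (l : ℕ) (ρ : F) (n : ℕ) : Set (SO2l F l ρ) :=
  {g | ∃ σ : Equiv.Perm (Fin n), mat F g = tnMat F l n (permMat F n σ) * wTildeMat F l n}

/-- Block index for the Siegel parabolic of `SO_{2n+1}`. -/
def blkSiegel (n i : ℕ) : ℕ := if i < n then 0 else if i = n then 1 else 2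

/-- The unipotent radical `V_n` of the Siegel parabolic of `SO_{2n+1}` (matrix level). -/
def VnSet (n : ℕ) : Set (Matrix (Fin (2*n+1)) (Fin (2*n+1)) F) :=
  {m | m ∈ SOset F (2*n+1) (Jmat F (2*n+1)) ∧
    ∀ i j : Fin (2*n+1), blkSiegel n (j : ℕ) ≤ blkSiegel n (i : ℕ) →
      m i j = if i = j then 1 else 0}

/-- The group `R^{l,n}` (matrix level). -/
def RlnSet (l : ℕ) (ρ : F) (n : ℕ) : Set (Matrix (Fin (2*l)) (Fin (2*l)) F) :=
  {m | m ∈ SOset F (2*l) (Jrho F l ρ) ∧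
    ∀ i j : Fin (2*l),
      ¬((n ≤ (i : ℕ) ∧ (i : ℕ) < l - 1 ∧ (j : ℕ) < n) ∨
        (2*l - n ≤ (i : ℕ) ∧ l + 1 ≤ (j : ℕ) ∧ (j : ℕ) < 2*l - n)) →
      m i j = if i = j then 1 else 0}

/-- The subgroup `N^{l-n} = U_{GL_{l-n-1}}·N_{l-n-1}` of `SO_{2l}`. -/
def NlnSet (l : ℕ) (ρ : F) (n : ℕ) : Set (SO2l F l ρ) :=
  {g | upUnip F (mat F g) ∧
    ∀ i j : Fin (2*l), l - n - 1 ≤ (i : ℕ) → (i : ℕ) < l + n + 1 →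
      l - n - 1 ≤ (j : ℕ) → (j : ℕ) < l + n + 1 →
      mat F g i j = if i = j then 1 else 0}

/-- Block index for standard parabolic subgroups of `SO_{2m+1}`, given cuts `C`. -/
def blkB (m : ℕ) (C : Finset ℕ) (i : ℕ) : ℕ :=
  (C.filter (fun c => c ≤ i)).card + (C.filter (fun c => 2*m + 1 - c ≤ i)).card

/-- The standard parabolic subgroup of `SO_{2m+1}` given by cuts `C` (as a set). -/
def pbP (m : ℕ) (C : Finset ℕ) : Set (SOodd F m) :=
  {g | ∀ i j : Fin (2*m+1), blkB m C (j : ℕ) < blkB m C (i : ℕ) → mat F g i j = 0}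

/-- The unipotent radical of the standard parabolic subgroup of `SO_{2m+1}` given by cuts `C`. -/
def pbV (m : ℕ) (C : Finset ℕ) : Set (SOodd F m) :=
  {g | ∀ i j : Fin (2*m+1), blkB m C (j : ℕ) ≤ blkB m C (i : ℕ) →
    mat F g i j = if i = j then 1 else 0}
/-- Apply a representation of `GL_n(F)` at a plain matrix (zero if not invertible). -/
def tauApp (n : ℕ) {Wτ : Type*} [AddCommGroup Wτ] [Module ℂ Wτ]
    (τ : Representation ℂ (GL (Fin n) F) Wτ) (m : Matrix (Fin n) (Fin n) F) :
    Wτ →ₗ[ℂ] Wτ :=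
  matFun (fun g : GL (Fin n) F => (g : Matrix (Fin n) (Fin n) F)) (fun g => τ g) m

/-- `Λ` is a nonzero `ψ⁻¹`-Whittaker functional for the representation `τ` of `GL_n(F)`. -/
def IsGenericGLinv (n : ℕ) (ψ : AddChar F ℂ) {Wτ : Type*} [AddCommGroup Wτ] [Module ℂ Wτ]
    (τ : Representation ℂ (GL (Fin n) F) Wτ) (Λ : Wτ →ₗ[ℂ] ℂ) : Prop :=
  Λ ≠ 0 ∧ ∀ u : GL (Fin n) F, upUnip F ((u : Matrix (Fin n) (Fin n) F)) →
    ∀ x : Wτ, Λ (τ u x) = ψ (-(glUSum F n (u : Matrix (Fin n) (Fin n) F))) * Λ x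

/-- The induced space `I(τ) = Ind_{Q_n}^{SO_{2n+1}} τ` (matrix level). -/
def IndTau (n : ℕ) {Wτ : Type*} [AddCommGroup Wτ] [Module ℂ Wτ]
    (τ : Representation ℂ (GL (Fin n) F) Wτ) :
    Set (Matrix (Fin (2*n+1)) (Fin (2*n+1)) F → Wτ) :=
  {ξ | (∀ g, g ∉ SOset F (2*n+1) (Jmat F (2*n+1)) → ξ g = 0) ∧
    ∀ a : GL (Fin n) F, ∀ u ∈ VnSet F n, ∀ g,
      ξ (lnMat F n (a : Matrix (Fin n) (Fin n) F) * u * g) = τ a (ξ g)}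

/-- The space `I(τ, ψ⁻¹)` spanned by the functions `f_ξ(g,a) = Λ(τ(a)ξ(g))`. -/
def Imodel (n : ℕ) {Wτ : Type*} [AddCommGroup Wτ] [Module ℂ Wτ]
    (τ : Representation ℂ (GL (Fin n) F) Wτ) (Λ : Wτ →ₗ[ℂ] ℂ) :
    Set (Matrix (Fin (2*n+1)) (Fin (2*n+1)) F → Matrix (Fin n) (Fin n) F → ℂ) :=
  {f | ∃ ξ ∈ IndTau F n τ, f = fun g a => Λ (tauApp F n τ a (ξ g))}

open Classical in
/-- The section `ξ_v ∈ I(τ)` supported on the Siegel parabolic with `ξ_v(l_n(a)u) = τ(a)v`. -/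
def xiv (n : ℕ) {Wτ : Type*} [AddCommGroup Wτ] [Module ℂ Wτ]
    (τ : Representation ℂ (GL (Fin n) F) Wτ) (v : Wτ) :
    Matrix (Fin (2*n+1)) (Fin (2*n+1)) F → Wτ :=
  fun m =>
    if h : ∃ p : (GL (Fin n) F) × Matrix (Fin (2*n+1)) (Fin (2*n+1)) F,
        p.2 ∈ VnSet F n ∧ m = lnMat F n ((p.1 : Matrix (Fin n) (Fin n) F)) * p.2
    then τ h.choose.1 v else 0

/-- The function `f_v = f_{ξ_v} ∈ I(τ, ψ⁻¹)`. -/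
def fvFun (n : ℕ) {Wτ : Type*} [AddCommGroup Wτ] [Module ℂ Wτ]
    (τ : Representation ℂ (GL (Fin n) F) Wτ) (Λ : Wτ →ₗ[ℂ] ℂ) (v : Wτ) :
    Matrix (Fin (2*n+1)) (Fin (2*n+1)) F → Matrix (Fin n) (Fin n) F → ℂ :=
  fun g a => Λ (tauApp F n τ a (xiv F n τ v g))

/-- The intertwining operator `M(τ, ψ⁻¹)` at the level of functions. -/
def MOp (n : ℕ)
    (f : Matrix (Fin (2*n+1)) (Fin (2*n+1)) F → Matrix (Fin n) (Fin n) F → ℂ) :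
    Matrix (Fin (2*n+1)) (Fin (2*n+1)) F → Matrix (Fin n) (Fin n) F → ℂ :=
  fun h a => ∑ᶠ u ∈ VnSet F n, f (wnOddMat F n * u * h) (dnMat F n * aStar F n a)

/-- The zeta integral for `n < l`, via the embedding `SO_{2n+1} → SO_{2l}`
(the sum over coset representatives is realized as `|U|⁻¹` times the full sum). -/
def ZetaLow (l : ℕ) (ρ : F) (n : ℕ) (φ : SO2l F l ρ → ℂ)
    (f : Matrix (Fin (2*n+1)) (Fin (2*n+1)) F → Matrix (Fin n) (Fin n) F → ℂ) : ℂ :=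
  (Nat.card (UoddMatSet F n) : ℂ)⁻¹ *
    ∑ᶠ g ∈ SOset F (2*n+1) (Jmat F (2*n+1)),
      (∑ᶠ r ∈ RlnSet F l ρ n,
        matFun (fun x : SO2l F l ρ => mat F x) φ
          (r * wlnMat F l n * embLow F l n g * (wlnMat F l n)⁻¹)) * f g 1

/-- The zeta integral for `n = l`, via the embedding `SO_{2l} → SO_{2l+1}`. -/
def ZetaTop (l : ℕ) (ρ : F) (φ : SO2l F l ρ → ℂ)
    (f : Matrix (Fin (2*l+1)) (Fin (2*l+1)) F → Matrix (Fin l) (Fin l) F → ℂ) : ℂ :=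
  (Nat.card (USet F l ρ) : ℂ)⁻¹ *
    ∑ᶠ g : SO2l F l ρ, φ g * f (wllMat F l ρ * embTop F l ρ (mat F g)) 1

/-- The combined zeta integral `Ψ` for `1 ≤ n ≤ l`. -/
def Zeta (l : ℕ) (ρ : F) (n : ℕ) (φ : SO2l F l ρ → ℂ)
    (f : Matrix (Fin (2*n+1)) (Fin (2*n+1)) F → Matrix (Fin n) (Fin n) F → ℂ) : ℂ :=
  if n < l then ZetaLow F l ρ n φ f
  else if h : n = l then ZetaTop F l ρ φ (cast (by rw [h]) f)
  else 0

/-- `c` is the gamma factor `γ(π × τ, ψ)`: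
`c · Ψ(W_v, f) = Ψ(W_v, M(τ,ψ⁻¹) f)` for all Whittaker functions `W_v` of `π`
and all `f ∈ I(τ, ψ⁻¹)`. -/
def IsGamma (l : ℕ) (ρ : F) (n : ℕ) {V : Type*} [AddCommGroup V] [Module ℂ V]
    (π : Representation ℂ (SO2l F l ρ) V) (Γ : V →ₗ[ℂ] ℂ)
    {Wτ : Type*} [AddCommGroup Wτ] [Module ℂ Wτ]
    (τ : Representation ℂ (GL (Fin n) F) Wτ) (Λ : Wτ →ₗ[ℂ] ℂ) (c : ℂ) : Prop :=
  ∀ v : V, ∀ f ∈ Imodel F n τ Λ,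
    c * Zeta F l ρ n (fun g => Γ (π g v)) f =
      Zeta F l ρ n (fun g => Γ (π g v)) (MOp F n f)

/-- The Bessel function of the conjugate representation `π^c`:
`B_{π^c,ψ}(g) = B_{π,ψ}(c·t̃⁻¹·g·t̃·c)`. -/
def BesselConj (l : ℕ) (ρ : F) (B : SO2l F l ρ → ℂ) : SO2l F l ρ → ℂ :=
  fun g => matFun (fun x : SO2l F l ρ => mat F x) B
    (cMat F l * (tTildeMat F l)⁻¹ * mat F g * tTildeMat F l * cMat F l)

end ConverseSO

/-!
If `B_{π,ψ}(t) ≠ 0` then `Γ(π(t)v₀) ≠ 0`. For `u, u' ∈ U` with `t u = u' t`, the equivariance of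
`Γ` and of `v₀` gives `ψ(u') Γ(π(t)v₀) = Γ(π(t u)v₀) = ψ(u) Γ(π(t)v₀)`, hence `ψ(u) = ψ(u')`.
Take `u = 1 + X + X²/2` for a root vector `X` in the Lie algebra of `U` (here `X³ = 0`, and `2` is
invertible because a finite field with a non-square has odd characteristic); then `u' = t u t⁻¹`
comes in the same way from `t X t⁻¹`. On a simple long root `t X t⁻¹ = (t_i / t_{i+1}) X`, and on
the two short roots through the anisotropic middle block `t` acts by the rotation
`[[a, bρ], [b, a]]`. As `ψ` is nontrivial, comparing `ψ(u)` with `ψ(u')` forces `t_i = t_{i+1}`,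
`b = 0` and `t_{l-1} a = 1`, and then `a² - b²ρ = 1` leaves `t = ±I`.
-/

lemma two_ne_zero_of_not_isSquare {K : Type*} [Field K] [Finite K] {ρ : K} (hρ : ¬IsSquare ρ) :
    (2 : K) ≠ 0 :=
  Ring.two_ne_zero fun h => hρ (FiniteField.isSquare_of_char_two h ρ)

lemma AddChar.eq_of_forall_apply_mul_eq {K M : Type*} [Field K] [CommMonoid M] {ψ : AddChar K M}
    (hψ : ψ ≠ 1) {c d : K} (h : ∀ x, ψ (c * x) = ψ (d * x)) : c = d :=
  to_mulShift_inj_of_isPrimitive (IsPrimitive.of_ne_one hψ) (DFunLike.ext _ _ h)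

section TruncExp

variable {K A : Type*} [Field K] [Ring A] [Algebra K A]

variable (K) in
def truncExp (X : A) : A := 1 + X + (2 : K)⁻¹ • (X * X)

lemma truncExp_neg_mul_truncExp (h2 : (2 : K) ≠ 0) {X : A} (hX : X * X * X = 0) :
    truncExp K (-X) * truncExp K X = 1 := by
  have hX' : X * (X * X) = 0 := by rw [← mul_assoc, hX]
  have hX4 : X * X * (X * X) = 0 := by rw [← mul_assoc, hX, zero_mul]
  simp only [truncExp, add_mul, mul_add, neg_mul, mul_neg, neg_neg, one_mul, mul_one,
    smul_mul_assoc, mul_smul_comm, hX, hX', hX4, smul_zero]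
  have h22 : (2 : K)⁻¹ + (2 : K)⁻¹ = 1 := by rw [← two_mul, mul_inv_cancel₀ h2]
  linear_combination (norm := module) h22 • (X * X)

lemma mul_truncExp_of_mul_eq {t X Y : A} (h : t * X = Y * t) :
    t * truncExp K X = truncExp K Y * t := by
  have h2 : t * (X * X) = Y * Y * t := by rw [← mul_assoc, h, mul_assoc, h, mul_assoc]
  simp only [truncExp, mul_add, add_mul, mul_one, one_mul, mul_smul_comm, smul_mul_assoc, h, h2]

end TruncExp

namespace Matrix

variable {K n : Type*} [Field K] [Fintype n]

lemma transpose_truncExp [DecidableEq n] (X : Matrix n n K) :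
    (truncExp K X)ᵀ = truncExp K Xᵀ := by
  simp [truncExp, transpose_mul]

lemma transpose_truncExp_mul_mul [DecidableEq n] (h2 : (2 : K) ≠ 0) {X J : Matrix n n K}
    (hX : X * X * X = 0) (hXJ : Xᵀ * J = -(J * X)) : (truncExp K X)ᵀ * J * truncExp K X = J := by
  have hJ : J * truncExp K (-X) = truncExp K Xᵀ * J :=
    mul_truncExp_of_mul_eq (by rw [hXJ, mul_neg])
  rw [transpose_truncExp, ← hJ, Matrix.mul_assoc, truncExp_neg_mul_truncExp h2 hX, Matrix.mul_one]

lemma mul_mul_eq_zero_of_forall {X : Matrix n n K} (h : ∀ i j k m, X i j * X j k * X k m = 0) :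
    X * X * X = 0 := by
  ext i m
  simp only [mul_apply, Finset.sum_mul, zero_apply]
  exact Finset.sum_eq_zero fun k _ => Finset.sum_eq_zero fun j _ => h i j k m

end Matrix

namespace ConverseSO

variable {F : Type} [Field F] {l : ℕ}

lemma det_eq_one_of_upUnip {m : ℕ} {M : Matrix (Fin m) (Fin m) F} (hM : upUnip F M) :
    M.det = 1 := by
  rw [det_of_isUpperTriangular fun i j (hji : j < i) => by rw [hM i j hji.le, if_neg hji.ne']]
  exact Finset.prod_eq_one fun i _ => by rw [hM i i le_rfl, if_pos rfl]

lemma mul_apply_eq_zero_of_strictUpper {m : ℕ} {X : Matrix (Fin m) (Fin m) F}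
    (hX : ∀ i j, j ≤ i → X i j = 0) {i j : Fin m} (hij : (j : ℕ) ≤ i + 1) :
    (X * X) i j = 0 := by
  rw [mul_apply]
  refine Finset.sum_eq_zero fun k _ => ?_
  rcases le_or_gt k i with hk | hk
  · rw [hX i k hk, zero_mul]
  · rw [hX k j (by rw [Fin.le_def]; rw [Fin.lt_def] at hk; omega), mul_zero]

lemma upUnip_truncExp {m : ℕ} {X : Matrix (Fin m) (Fin m) F}
    (hX : ∀ i j, j ≤ i → X i j = 0) :
    upUnip F (truncExp F X) := by
  intro i j hji
  simp only [truncExp, Matrix.add_apply, Matrix.smul_apply, one_apply, hX i j (Fin.le_def.mpr hji),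
    mul_apply_eq_zero_of_strictUpper hX (i := i) (j := j) (by omega), smul_zero, add_zero]

lemma Jmat_mul_apply (m : ℕ) (M : Matrix (Fin m) (Fin m) F) (p q : Fin m) :
    (Jmat F m * M) p q = M p.rev q := by
  rw [mul_apply, Fintype.sum_eq_single p.rev]
  all_goals
    try intro k hk
    simp only [Jmat, of_apply, Fin.ext_iff, Fin.val_rev, ne_eq] at *
    split_ifs <;> first | (exfalso; omega) | ring1

lemma Dmat_mul_apply (hl : 1 ≤ l) (ρ : F) (M : Matrix (Fin (2*l)) (Fin (2*l)) F)
    (p q : Fin (2*l)) :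
    (Dmat F l ρ * M) p q =
      if (p : ℕ) = l - 1 then M ⟨l, by omega⟩ q
      else if (p : ℕ) = l then -ρ * M ⟨l - 1, by omega⟩ q
      else M p q := by
  rw [mul_apply]
  split_ifs with h1 h2 <;>
    [rw [Fintype.sum_eq_single ⟨l, by omega⟩];
     rw [Fintype.sum_eq_single ⟨l - 1, by omega⟩];
     rw [Fintype.sum_eq_single p]]
  all_goals
    try intro k hk
    simp only [Dmat, of_apply, Fin.ext_iff, ne_eq, and_true, true_and] at *
    split_ifs <;> first | (exfalso; omega) | ring1

lemma Jrho_mul_apply (hl : 1 ≤ l) (ρ : F) (M : Matrix (Fin (2*l)) (Fin (2*l)) F)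
    (p q : Fin (2*l)) :
    (Jrho F l ρ * M) p q =
      if (p : ℕ) = l - 1 then M p q
      else if (p : ℕ) = l then -ρ * M p q
      else M p.rev q := by
  rw [Jrho, Matrix.mul_assoc, Dmat_mul_apply hl, Jmat_mul_apply, Jmat_mul_apply, Jmat_mul_apply]
  split_ifs with h1 h2
  · rw [show Fin.rev ⟨l, _⟩ = p from Fin.ext (show 2 * l - (l + 1) = (p : ℕ) by omega)]
  · rw [show Fin.rev ⟨l - 1, _⟩ = p from
      Fin.ext (show 2 * l - (l - 1 + 1) = (p : ℕ) by omega)]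
  · rfl

lemma Jrho_transpose (hl : 1 ≤ l) (ρ : F) : (Jrho F l ρ)ᵀ = Jrho F l ρ := by
  ext p q
  rw [transpose_apply, ← mul_one (Jrho F l ρ), Jrho_mul_apply hl, Jrho_mul_apply hl]
  simp only [one_apply, Fin.ext_iff, Fin.val_rev]
  split_ifs <;> first | (exfalso; omega) | ring1

lemma torusMat_mul_apply (hl : 1 ≤ l) (ρ : F) (tv : ℕ → Fˣ) (a b : F)
    (M : Matrix (Fin (2*l)) (Fin (2*l)) F) (p q : Fin (2*l)) :
    (torusMat F l ρ tv a b * M) p q =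
      if (p : ℕ) < l - 1 then (tv p : F) * M p q
      else if (p : ℕ) = l - 1 then a * M p q + b * ρ * M ⟨l, by omega⟩ q
      else if (p : ℕ) = l then b * M ⟨l - 1, by omega⟩ q + a * M p q
      else (tv (2*l - 1 - p) : F)⁻¹ * M p q := by
  rw [mul_apply]
  split_ifs with h1 h2 h3 <;>
    [rw [Fintype.sum_eq_single p];
     rw [Fintype.sum_eq_add p ⟨l, by omega⟩ (Fin.ne_of_val_ne (show (p : ℕ) ≠ l by omega))];
     rw [Fintype.sum_eq_add ⟨l - 1, by omega⟩ p (Fin.ne_of_val_ne (show l - 1 ≠ p by omega))];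
     rw [Fintype.sum_eq_single p]]
  all_goals
    try intro k hk
    simp only [torusMat, of_apply, Fin.ext_iff, ne_eq] at *
    split_ifs <;> first | (exfalso; omega) | ring1

lemma mul_torusMat_apply (hl : 1 ≤ l) (ρ : F) (tv : ℕ → Fˣ) (a b : F)
    (M : Matrix (Fin (2*l)) (Fin (2*l)) F) (p q : Fin (2*l)) :
    (M * torusMat F l ρ tv a b) p q =
      if (q : ℕ) < l - 1 then M p q * (tv q : F)
      else if (q : ℕ) = l - 1 then M p q * a + M p ⟨l, by omega⟩ * b
      else if (q : ℕ) = l then M p ⟨l - 1, by omega⟩ * (b * ρ) + M p q * a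
      else M p q * (tv (2*l - 1 - q) : F)⁻¹ := by
  rw [mul_apply]
  split_ifs with h1 h2 h3 <;>
    [rw [Fintype.sum_eq_single q];
     rw [Fintype.sum_eq_add q ⟨l, by omega⟩ (Fin.ne_of_val_ne (show (q : ℕ) ≠ l by omega))];
     rw [Fintype.sum_eq_add ⟨l - 1, by omega⟩ q (Fin.ne_of_val_ne (show l - 1 ≠ q by omega))];
     rw [Fintype.sum_eq_single q]]
  all_goals
    try intro k hk
    simp only [torusMat, of_apply, Fin.ext_iff, ne_eq] at *
    split_ifs <;> first | (exfalso; omega) | ring1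

def ofSOset {ρ : F} (M : Matrix (Fin (2*l)) (Fin (2*l)) F)
    (hM : M ∈ SOset F (2*l) (Jrho F l ρ)) : SO2l F l ρ :=
  ⟨Matrix.nonsingInvUnit M (by rw [hM.1]; exact isUnit_one), hM⟩

lemma mat_ofSOset {ρ : F} (M : Matrix (Fin (2*l)) (Fin (2*l)) F)
    (hM : M ∈ SOset F (2*l) (Jrho F l ρ)) : mat F (ofSOset M hM) = M := rfl

lemma psiU_eq_of_bessel_ne_zero {ρ : F} {ψ : AddChar F ℂ} {V : Type} [AddCommGroup V]
    [Module ℂ V] {π : Representation ℂ (SO2l F l ρ) V} {Γ : V →ₗ[ℂ] ℂ} {v₀ : V}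
    (hΓ : IsWhittaker F l ρ ψ π Γ) (hv₀ : IsWhitVec F l ρ ψ π Γ v₀) {t : SO2l F l ρ}
    (hB : Bessel F l ρ π Γ v₀ t ≠ 0) {M N : Matrix (Fin (2*l)) (Fin (2*l)) F}
    (hM : M ∈ SOset F (2*l) (Jrho F l ρ)) (hN : N ∈ SOset F (2*l) (Jrho F l ρ))
    (hMU : upUnip F M) (hNU : upUnip F N) (h : mat F t * M = N * mat F t) :
    psiU F l ψ M = psiU F l ψ N := by
  have hΓt : Γ (π t v₀) ≠ 0 := (div_ne_zero_iff.mp hB).1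
  have hcomm : t * ofSOset M hM = ofSOset N hN * t := Subtype.ext (Units.ext h)
  have key := congrArg (fun g => Γ (π g v₀)) hcomm
  simp only [map_mul, Module.End.mul_apply] at key
  rw [hv₀.2 _ hMU, map_smul, map_smul, hΓ.2 (ofSOset N hN) hNU, mat_ofSOset, mat_ofSOset] at key
  exact mul_right_cancel₀ hΓt key

lemma psiU_congr (ψ : AddChar F ℂ) {M N : Matrix (Fin (2*l)) (Fin (2*l)) F}
    (h : ∀ p q : Fin (2*l), ((q : ℕ) = p + 1 ∨ (p : ℕ) + 2 = l ∧ (q : ℕ) = l) →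
      M p q = N p q) :
    psiU F l ψ M = psiU F l ψ N := by
  unfold psiU
  congr 1
  refine Finset.sum_congr rfl fun p _ => Finset.sum_congr rfl fun q _ => ?_
  split_ifs with h1 h2
  · exact h p q (Or.inl h1.1)
  · rw [h p q (Or.inr h2)]
  · rfl

structure IsLieUCubeZero (l : ℕ) (ρ : F) (X : Matrix (Fin (2*l)) (Fin (2*l)) F) : Prop where
  strictUpper : ∀ i j, j ≤ i → X i j = 0
  cube : X * X * X = 0
  transpose_mul_Jrho : Xᵀ * Jrho F l ρ = -(Jrho F l ρ * X)

namespace IsLieUCubeZero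

variable {ρ : F} {X : Matrix (Fin (2*l)) (Fin (2*l)) F}

lemma truncExp_mem_SOset (h2 : (2 : F) ≠ 0) (hX : IsLieUCubeZero l ρ X) :
    truncExp F X ∈ SOset F (2*l) (Jrho F l ρ) :=
  ⟨det_eq_one_of_upUnip (upUnip_truncExp hX.strictUpper),
    transpose_truncExp_mul_mul h2 hX.cube hX.transpose_mul_Jrho⟩

/-- `J_ρ` maps the coordinates `l - 1` and `l` to multiples of themselves, so skewness pairs the
entry `(l - 1, l)` with the strictly lower entry `(l, l - 1)`. -/
lemma apply_sub_one_apply_eq_zero (hX : IsLieUCubeZero l ρ X)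
    {p q : Fin (2*l)} (hp : (p : ℕ) + 1 = l) (hq : (q : ℕ) = l) : X p q = 0 := by
  have h := congrFun (congrFun hX.transpose_mul_Jrho q) p
  rw [← Jrho_transpose (by omega) ρ, ← transpose_mul, Jrho_transpose (by omega) ρ,
    transpose_apply, neg_apply, Jrho_mul_apply (by omega), Jrho_mul_apply (by omega),
    if_pos (by omega), if_neg (by omega), if_pos hq, hX.strictUpper q p (by omega)] at h
  simpa using h

lemma psiU_truncExp (hX : IsLieUCubeZero l ρ X) (ψ : AddChar F ℂ) :
    psiU F l ψ (truncExp F X) = psiU F l ψ (1 + X) := by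
  refine psiU_congr ψ fun p q hpq => ?_
  suffices (X * X) p q = 0 by simp [truncExp, this]
  rcases hpq with hq | ⟨hp, hq⟩
  · exact mul_apply_eq_zero_of_strictUpper hX.strictUpper (by omega)
  rw [mul_apply]
  refine Finset.sum_eq_zero fun k _ => ?_
  rcases lt_trichotomy (k : ℕ) (l - 1) with hk | hk | hk
  · rw [hX.strictUpper p k (by rw [Fin.le_def]; omega), zero_mul]
  · rw [hX.apply_sub_one_apply_eq_zero (by omega) hq, mul_zero]
  · rw [hX.strictUpper k q (by rw [Fin.le_def]; omega), mul_zero]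

end IsLieUCubeZero

def longBlock (l i : ℕ) (α β : F) : Matrix (Fin (2*l)) (Fin (2*l)) F :=
  Matrix.of fun p q =>
    if (p : ℕ) = i ∧ (q : ℕ) = i + 1 then α
    else if (p : ℕ) + i + 2 = 2*l ∧ (q : ℕ) + i + 1 = 2*l then β
    else 0

def shortBlock (l : ℕ) (α β γ δ : F) : Matrix (Fin (2*l)) (Fin (2*l)) F :=
  Matrix.of fun p q =>
    if (p : ℕ) + 2 = l ∧ (q : ℕ) + 1 = l then α
    else if (p : ℕ) + 2 = l ∧ (q : ℕ) = l then β
    else if (p : ℕ) + 1 = l ∧ (q : ℕ) = l + 1 then γ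
    else if (p : ℕ) = l ∧ (q : ℕ) = l + 1 then δ
    else 0

def longRootVec (l i : ℕ) (x : F) : Matrix (Fin (2*l)) (Fin (2*l)) F := longBlock l i x (-x)

def shortRootVec (l : ℕ) (ρ x z : F) : Matrix (Fin (2*l)) (Fin (2*l)) F :=
  shortBlock l x (ρ * z) (-x) z

lemma torusMat_mul_longBlock {i : ℕ} (hi : i + 3 ≤ l) (ρ : F) (tv : ℕ → Fˣ)
    (a b α β : F) :
    torusMat F l ρ tv a b * longBlock l i α β =
      longBlock l i ((tv i : F) * α) ((tv (i + 1) : F)⁻¹ * β) := by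
  ext p q
  rw [torusMat_mul_apply (by omega)]
  simp only [longBlock, of_apply]
  -- Contradictory branches are pruned as they arise; `split_ifs` on everything is exponential.
  repeat' (first | (exfalso; omega) | split)
  all_goals first
    | ring1
    | rw [show (p : ℕ) = i by omega]
    | rw [show 2 * l - 1 - (p : ℕ) = i + 1 by omega]

lemma longBlock_mul_torusMat {i : ℕ} (hi : i + 3 ≤ l) (ρ : F) (tv : ℕ → Fˣ)
    (a b α β : F) :
    longBlock l i α β * torusMat F l ρ tv a b =
      longBlock l i (α * (tv (i + 1) : F)) (β * (tv i : F)⁻¹) := by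
  ext p q
  rw [mul_torusMat_apply (by omega)]
  simp only [longBlock, of_apply]
  repeat' (first | (exfalso; omega) | split)
  all_goals first
    | ring1
    | rw [show (q : ℕ) = i + 1 by omega]
    | rw [show 2 * l - 1 - (q : ℕ) = i by omega]

lemma torusMat_mul_shortBlock (hl : 2 ≤ l) (ρ : F) (tv : ℕ → Fˣ) (a b α β γ δ : F) :
    torusMat F l ρ tv a b * shortBlock l α β γ δ =
      shortBlock l ((tv (l - 2) : F) * α) ((tv (l - 2) : F) * β) (a * γ + b * ρ * δ)
        (b * γ + a * δ) := by
  ext p q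
  rw [torusMat_mul_apply (by omega)]
  simp only [shortBlock, of_apply, true_and]
  repeat' (first | (exfalso; omega) | split)
  all_goals first
    | ring1
    | rw [show (p : ℕ) = l - 2 by omega]

lemma shortBlock_mul_torusMat (hl : 2 ≤ l) (ρ : F) (tv : ℕ → Fˣ) (a b α β γ δ : F) :
    shortBlock l α β γ δ * torusMat F l ρ tv a b =
      shortBlock l (α * a + β * b) (α * (b * ρ) + β * a) (γ * (tv (l - 2) : F)⁻¹)
        (δ * (tv (l - 2) : F)⁻¹) := by
  ext p q
  rw [mul_torusMat_apply (by omega)]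
  simp only [shortBlock, of_apply, and_true]
  repeat' (first | (exfalso; omega) | split)
  all_goals first
    | ring1
    | rw [show 2 * l - 1 - (q : ℕ) = l - 2 by omega]

lemma transpose_longRootVec_mul_Jrho {i : ℕ} (hi : i + 3 ≤ l) (ρ x : F) :
    (longRootVec l i x)ᵀ * Jrho F l ρ = -(Jrho F l ρ * longRootVec l i x) := by
  rw [← Jrho_transpose (by omega) ρ, ← transpose_mul, Jrho_transpose (by omega) ρ]
  ext p q
  rw [transpose_apply, neg_apply, Jrho_mul_apply (by omega), Jrho_mul_apply (by omega)]
  simp only [longRootVec, longBlock, of_apply, Fin.val_rev]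
  repeat' (first | (exfalso; omega) | split)
  all_goals ring1

lemma Jrho_mul_shortBlock (hl : 2 ≤ l) (ρ α β γ δ : F) :
    Jrho F l ρ * shortBlock l α β γ δ =
      Matrix.of fun p q : Fin (2*l) =>
        if (p : ℕ) = l + 1 ∧ (q : ℕ) + 1 = l then α
        else if (p : ℕ) = l + 1 ∧ (q : ℕ) = l then β
        else if (p : ℕ) + 1 = l ∧ (q : ℕ) = l + 1 then γ
        else if (p : ℕ) = l ∧ (q : ℕ) = l + 1 then -ρ * δ
        else 0 := by
  ext p q
  rw [Jrho_mul_apply (by omega)]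
  simp only [shortBlock, of_apply, Fin.val_rev]
  repeat' (first | (exfalso; omega) | split)
  all_goals ring1

lemma transpose_shortRootVec_mul_Jrho (hl : 2 ≤ l) (ρ x z : F) :
    (shortRootVec l ρ x z)ᵀ * Jrho F l ρ = -(Jrho F l ρ * shortRootVec l ρ x z) := by
  rw [← Jrho_transpose (by omega) ρ, ← transpose_mul, Jrho_transpose (by omega) ρ,
    shortRootVec, Jrho_mul_shortBlock hl]
  ext p q
  simp only [transpose_apply, neg_of, of_apply, Pi.neg_apply]
  repeat' (first | (exfalso; omega) | split)
  all_goals ring1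

lemma isLieUCubeZero_longRootVec {i : ℕ} (hi : i + 3 ≤ l) (ρ x : F) :
    IsLieUCubeZero l ρ (longRootVec l i x) where
  strictUpper p q hqp := by
    rw [Fin.le_def] at hqp
    simp only [longRootVec, longBlock, of_apply]
    split_ifs <;> first | rfl | omega
  cube := mul_mul_eq_zero_of_forall fun p q r s => by
    simp only [longRootVec, longBlock, of_apply]
    split_ifs <;> first | ring1 | (exfalso; omega)
  transpose_mul_Jrho := transpose_longRootVec_mul_Jrho hi ρ x

lemma isLieUCubeZero_shortRootVec (hl : 2 ≤ l) (ρ x z : F) :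
    IsLieUCubeZero l ρ (shortRootVec l ρ x z) where
  strictUpper p q hqp := by
    rw [Fin.le_def] at hqp
    simp only [shortRootVec, shortBlock, of_apply]
    split_ifs <;> first | rfl | omega
  cube := mul_mul_eq_zero_of_forall fun p q r s => by
    simp only [shortRootVec, shortBlock, of_apply]
    split_ifs <;> first | ring1 | (exfalso; omega)
  transpose_mul_Jrho := transpose_shortRootVec_mul_Jrho hl ρ x z

lemma psiU_one_add_longBlock {i : ℕ} (hi : i + 3 ≤ l) (ψ : AddChar F ℂ) (α β : F) :
    psiU F l ψ (1 + longBlock l i α β) = ψ α := by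
  unfold psiU
  congr 1
  have hpt : ∀ p q : Fin (2*l),
      (if (q : ℕ) = p + 1 ∧ (p : ℕ) + 3 ≤ l then (1 + longBlock l i α β) p q
       else if (p : ℕ) + 2 = l ∧ (q : ℕ) = l then (2 : F)⁻¹ * (1 + longBlock l i α β) p q
       else 0) = if p = ⟨i, by omega⟩ ∧ q = ⟨i + 1, by omega⟩ then α else 0 := by
    intro p q
    simp only [longBlock, Matrix.add_apply, one_apply, of_apply, Fin.ext_iff]
    split_ifs <;> first | ring1 | (exfalso; omega)
  simp only [hpt]
  simp [ite_and]

lemma psiU_one_add_shortBlock (hl : 2 ≤ l) (ψ : AddChar F ℂ) (α β γ δ : F) :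
    psiU F l ψ (1 + shortBlock l α β γ δ) = ψ (2⁻¹ * β) := by
  unfold psiU
  congr 1
  have hpt : ∀ p q : Fin (2*l),
      (if (q : ℕ) = p + 1 ∧ (p : ℕ) + 3 ≤ l then (1 + shortBlock l α β γ δ) p q
       else if (p : ℕ) + 2 = l ∧ (q : ℕ) = l then
         (2 : F)⁻¹ * (1 + shortBlock l α β γ δ) p q
       else 0) =
        if p = ⟨l - 2, by omega⟩ ∧ q = ⟨l, by omega⟩ then 2⁻¹ * β else 0 := by
    intro p q
    simp only [shortBlock, Matrix.add_apply, one_apply, of_apply, Fin.ext_iff]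
    split_ifs <;> first | ring1 | (exfalso; omega)
  simp only [hpt]
  simp [ite_and]

lemma torusMat_mul_longRootVec {i : ℕ} (hi : i + 3 ≤ l) (ρ : F) (tv : ℕ → Fˣ)
    (a b x : F) :
    torusMat F l ρ tv a b * longRootVec l i x =
      longRootVec l i ((tv i : F) * (tv (i + 1) : F)⁻¹ * x) * torusMat F l ρ tv a b := by
  rw [longRootVec, longRootVec, torusMat_mul_longBlock hi, longBlock_mul_torusMat hi]
  congr 1 <;> field_simp

lemma torusMat_mul_shortRootVec (hl : 2 ≤ l) (ρ : F) (tv : ℕ → Fˣ) {a b : F}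
    (hab : a ^ 2 - b ^ 2 * ρ = 1) (x z : F) :
    torusMat F l ρ tv a b * shortRootVec l ρ x z =
      shortRootVec l ρ (tv (l - 2) * (a * x - b * ρ * z)) (tv (l - 2) * (a * z - b * x))
        * torusMat F l ρ tv a b := by
  rw [shortRootVec, shortRootVec, torusMat_mul_shortBlock hl, shortBlock_mul_torusMat hl]
  congr 1
  · linear_combination (-(tv (l - 2) : F) * x) * hab
  · linear_combination (-(tv (l - 2) : F) * ρ * z) * hab
  · field_simp; ring
  · field_simp; ring

lemma torusMat_eq_one_or_neg_one (ρ : F) (tv : ℕ → Fˣ) {a : F} (ha : a ^ 2 = 1)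
    (hca : (tv (l - 2) : F) * a = 1) (hchain : ∀ i, i + 3 ≤ l → (tv i : F) = tv (i + 1)) :
    torusMat F l ρ tv a 0 = 1 ∨ torusMat F l ρ tv a 0 = -1 := by
  have hinv : a⁻¹ = a := inv_eq_of_mul_eq_one_right (by rw [← sq, ha])
  have hconst : ∀ k ≤ l - 2, (tv k : F) = a := by
    intro k hk
    induction hk using Nat.decreasingInduction with
    | self => rw [← hinv, eq_inv_of_mul_eq_one_left hca]
    | of_succ k hk ih => rw [hchain k (by omega), ih]
  have hscalar : torusMat F l ρ tv a 0 = a • 1 := by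
    ext p q
    simp only [torusMat, of_apply, Matrix.smul_apply, one_apply, Fin.ext_iff, smul_eq_mul]
    split_ifs <;> first
      | (exfalso; omega)
      | ring1
      | simp [hconst p (by omega)]
      | simp [hconst (2 * l - 1 - p) (by omega), hinv]
  rcases sq_eq_one_iff.mp ha with rfl | rfl
  · exact Or.inl (by rw [hscalar, one_smul])
  · exact Or.inr (by rw [hscalar, neg_one_smul])

section BesselTorus

variable {ρ : F} {ψ : AddChar F ℂ} {V : Type} [AddCommGroup V] [Module ℂ V]
  {π : Representation ℂ (SO2l F l ρ) V} {Γ : V →ₗ[ℂ] ℂ} {v₀ : V} {t : SO2l F l ρ}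
  {tv : ℕ → Fˣ} {a b : F}

lemma psiU_one_add_eq_of_bessel_ne_zero (h2 : (2 : F) ≠ 0)
    (hΓ : IsWhittaker F l ρ ψ π Γ) (hv₀ : IsWhitVec F l ρ ψ π Γ v₀)
    (hB : Bessel F l ρ π Γ v₀ t ≠ 0) {X Y : Matrix (Fin (2*l)) (Fin (2*l)) F}
    (hX : IsLieUCubeZero l ρ X) (hY : IsLieUCubeZero l ρ Y) (h : mat F t * X = Y * mat F t) :
    psiU F l ψ (1 + X) = psiU F l ψ (1 + Y) := by
  rw [← hX.psiU_truncExp, ← hY.psiU_truncExp]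
  exact psiU_eq_of_bessel_ne_zero hΓ hv₀ hB (hX.truncExp_mem_SOset h2) (hY.truncExp_mem_SOset h2)
    (upUnip_truncExp hX.strictUpper) (upUnip_truncExp hY.strictUpper) (mul_truncExp_of_mul_eq h)

lemma torusMat_rot_eq_of_bessel_ne_zero (h2 : (2 : F) ≠ 0) (hl : 2 ≤ l) (hρ : ρ ≠ 0)
    (hψ : ψ ≠ 1) (hΓ : IsWhittaker F l ρ ψ π Γ) (hv₀ : IsWhitVec F l ρ ψ π Γ v₀)
    (hB : Bessel F l ρ π Γ v₀ t ≠ 0) (hab : a ^ 2 - b ^ 2 * ρ = 1)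
    (ht : mat F t = torusMat F l ρ tv a b) :
    b = 0 ∧ (tv (l - 2) : F) * a = 1 := by
  have hc : (tv (l - 2) : F) ≠ 0 := Units.ne_zero _
  have key (x z : F) :
      ψ (2⁻¹ * (ρ * z)) = ψ (2⁻¹ * (ρ * (tv (l - 2) * (a * z - b * x)))) := by
    simpa only [shortRootVec, psiU_one_add_shortBlock hl] using
      psiU_one_add_eq_of_bessel_ne_zero h2 hΓ hv₀ hB (isLieUCubeZero_shortRootVec hl ρ x z)
        (isLieUCubeZero_shortRootVec hl ρ _ _) (ht ▸ torusMat_mul_shortRootVec hl ρ tv hab x z)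
  have hb : 0 = -(2⁻¹ * ρ * tv (l - 2) * b) := AddChar.eq_of_forall_apply_mul_eq hψ fun x => by
    convert key x 0 using 2 <;> ring
  obtain rfl : b = 0 := by simpa [h2, hρ, hc] using hb
  refine ⟨rfl, (AddChar.eq_of_forall_apply_mul_eq hψ fun w => ?_).symm⟩
  convert key 0 (2 * ρ⁻¹ * w) using 2 <;> field_simp
  ring

lemma torusMat_diag_eq_of_bessel_ne_zero (h2 : (2 : F) ≠ 0) (hψ : ψ ≠ 1)
    (hΓ : IsWhittaker F l ρ ψ π Γ) (hv₀ : IsWhitVec F l ρ ψ π Γ v₀)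
    (hB : Bessel F l ρ π Γ v₀ t ≠ 0) (ht : mat F t = torusMat F l ρ tv a b)
    {i : ℕ} (hi : i + 3 ≤ l) : (tv i : F) = tv (i + 1) := by
  have key (x : F) : ψ (1 * x) = ψ ((tv i : F) * (tv (i + 1) : F)⁻¹ * x) := by
    simpa only [longRootVec, psiU_one_add_longBlock hi, one_mul] using
      psiU_one_add_eq_of_bessel_ne_zero h2 hΓ hv₀ hB (isLieUCubeZero_longRootVec hi ρ x)
        (isLieUCubeZero_longRootVec hi ρ _) (ht ▸ torusMat_mul_longRootVec hi ρ tv a b x)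
  have h1 := AddChar.eq_of_forall_apply_mul_eq hψ key
  rw [eq_mul_inv_iff_mul_eq₀ (Units.ne_zero _), one_mul] at h1
  exact h1.symm

end BesselTorus

theorem bessel_torus_support_center_general
    (F : Type) [Field F] [Fintype F]
    (ψ : AddChar F ℂ) (hψ : ψ ≠ 1)
    (l : ℕ) (hl : 2 ≤ l) (ρ : F) (hρ : ∀ x : F, x ^ 2 ≠ ρ)
    (V : Type) [AddCommGroup V] [Module ℂ V]
    (π : Representation ℂ (SO2l F l ρ) V)
    (Γ : V →ₗ[ℂ] ℂ) (hΓ : IsWhittaker F l ρ ψ π Γ)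
    (v₀ : V) (hv₀ : IsWhitVec F l ρ ψ π Γ v₀)
    (t : SO2l F l ρ) (ht : t ∈ TSet F l ρ)
    (hB : Bessel F l ρ π Γ v₀ t ≠ 0) :
    mat F t = 1 ∨ mat F t = -1 := by
  obtain ⟨tv, a, b, hab, hmat⟩ := ht
  have h2 : (2 : F) ≠ 0 :=
    two_ne_zero_of_not_isSquare (ρ := ρ) fun ⟨r, hr⟩ => hρ r (by rw [hr, sq])
  have hρ0 : ρ ≠ 0 := fun h => hρ 0 (by rw [h, sq, zero_mul])
  obtain ⟨rfl, hca⟩ := torusMat_rot_eq_of_bessel_ne_zero h2 hl hρ0 hψ hΓ hv₀ hB hab hmat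
  rw [hmat]
  exact torusMat_eq_one_or_neg_one ρ tv (by linear_combination hab) hca
    fun i hi => torusMat_diag_eq_of_bessel_ne_zero h2 hψ hΓ hv₀ hB hmat hi

theorem bessel_torus_support_center
    (F : Type) [Field F] [Fintype F] (p r : ℕ) (hp : p.Prime) (hp2 : p ≠ 2)
    (hr : 0 < r) (hcard : Fintype.card F = p ^ r)
    (ψ : AddChar F ℂ) (hψ : ψ ≠ 1)
    (l : ℕ) (hl : 2 ≤ l) (ρ : F) (hρ : ∀ x : F, x ^ 2 ≠ ρ)
    (V : Type) [AddCommGroup V] [Module ℂ V]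
    (π : Representation ℂ (SO2l F l ρ) V)
    (hπirr : IsIrrep π)
    (Γ : V →ₗ[ℂ] ℂ) (hΓ : IsWhittaker F l ρ ψ π Γ)
    (v₀ : V) (hv₀ : IsWhitVec F l ρ ψ π Γ v₀)
    (t : SO2l F l ρ) (ht : t ∈ TSet F l ρ)
    (hB : Bessel F l ρ π Γ v₀ t ≠ 0) :
    mat F t = 1 ∨ mat F t = -1 :=
  bessel_torus_support_center_general F ψ hψ l hl ρ hρ V π Γ hΓ v₀ hv₀ t ht hB

end ConverseSO
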